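/- Let v be a node of the extended syntax tree T of a C^t_3 formula ψ with (A,B) ⊨ ψ, with two children v_1, v_2 (so the syntax label of v is ∨ or ∧), and let δ_i be a minimal separator for il(v_i), i ∈ {1,2}. Then the minimal separator δ for il(v) satisfies w(δ) ≤ w(δ_1) + w(δ_2). -/
import Mathlib


/-- Terms over the linear-order signature `{min, max, <, succ}`. -/
inductive LTerm : Type
  | min : LTerm
  | max : LTerm
  | var : ℕ → LTerm

/-- Formulas of counting logic over the signature `{min, max, <, succ}`:
first-order logic extended with the counting quantifiers `∃^{≥k} x_j` and `∀^{≥k} x_j`. -/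
inductive CFormula : Type
  | eq : LTerm → LTerm → CFormula
  | lt : LTerm → LTerm → CFormula
  | succ : LTerm → LTerm → CFormula
  | not : CFormula → CFormula
  | or : CFormula → CFormula → CFormula
  | and : CFormula → CFormula → CFormula
  | exCnt : ℕ → ℕ → CFormula → CFormula    -- `exCnt k j ψ` is `∃^{≥k} x_j ψ`
  | allCnt : ℕ → ℕ → CFormula → CFormula   -- `allCnt k j ψ` is `∀^{≥k} x_j ψ = ¬∃^{≥k} x_j ¬ψ`

/-- All variables occurring in a term have index `< m`. -/
def LTerm.varsLT (m : ℕ) : LTerm → Prop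
  | .var j => j < m
  | _ => True

namespace CFormula

/-- Formula size. -/
def size : CFormula → ℕ
  | eq _ _ => 1
  | lt _ _ => 1
  | succ _ _ => 1
  | not ψ => ψ.size + 1
  | or ψ θ => ψ.size + θ.size
  | and ψ θ => ψ.size + θ.size
  | exCnt _ _ ψ => ψ.size + 1
  | allCnt _ _ ψ => ψ.size + 1

/-- Counting rank: the maximum counting rank of the quantifiers of the formula. -/
def crank : CFormula → ℕ
  | eq _ _ => 0
  | lt _ _ => 0
  | succ _ _ => 0
  | not ψ => ψ.crank
  | or ψ θ => max ψ.crank θ.crank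
  | and ψ θ => max ψ.crank θ.crank
  | exCnt k _ ψ => max k ψ.crank
  | allCnt k _ ψ => max k ψ.crank

/-- Quantifier rank: maximal nesting depth of quantifiers. -/
def qrank : CFormula → ℕ
  | eq _ _ => 0
  | lt _ _ => 0
  | succ _ _ => 0
  | not ψ => ψ.qrank
  | or ψ θ => max ψ.qrank θ.qrank
  | and ψ θ => max ψ.qrank θ.qrank
  | exCnt _ _ ψ => ψ.qrank + 1
  | allCnt _ _ ψ => ψ.qrank + 1

/-- The formula uses only the variables `x_0, …, x_{m-1}`. -/
def varsLT (m : ℕ) : CFormula → Prop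
  | eq t t' => t.varsLT m ∧ t'.varsLT m
  | lt t t' => t.varsLT m ∧ t'.varsLT m
  | succ t t' => t.varsLT m ∧ t'.varsLT m
  | not ψ => ψ.varsLT m
  | or ψ θ => ψ.varsLT m ∧ θ.varsLT m
  | and ψ θ => ψ.varsLT m ∧ θ.varsLT m
  | exCnt _ j ψ => j < m ∧ ψ.varsLT m
  | allCnt _ j ψ => j < m ∧ ψ.varsLT m

/-- Atomic formulas. -/
def IsAtomic : CFormula → Prop
  | eq _ _ => True
  | lt _ _ => True
  | succ _ _ => True
  | _ => False

end CFormula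

/-- A relational structure over the signature `{min, max, <, succ}`. -/
structure LOStruct : Type 1 where
  carrier : Type
  lt : carrier → carrier → Prop
  succ : carrier → carrier → Prop
  bot : carrier
  top : carrier

/-- Value of a term in a structure under a variable assignment. -/
def LTerm.val (S : LOStruct) (α : ℕ → S.carrier) : LTerm → S.carrier
  | .min => S.bot
  | .max => S.top
  | .var j => α j

/-- Satisfaction of a counting-logic formula in a structure under an assignment.
`∃^{≥k} x_j ψ` holds iff at least `k` distinct values for `x_j` satisfy `ψ`. -/
def Sat (S : LOStruct) : (ℕ → S.carrier) → CFormula → Prop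
  | α, .eq t t' => t.val S α = t'.val S α
  | α, .lt t t' => S.lt (t.val S α) (t'.val S α)
  | α, .succ t t' => S.succ (t.val S α) (t'.val S α)
  | α, .not ψ => ¬ Sat S α ψ
  | α, .or ψ θ => Sat S α ψ ∨ Sat S α θ
  | α, .and ψ θ => Sat S α ψ ∧ Sat S α θ
  | α, .exCnt k j ψ =>
      ∃ f : Fin k → S.carrier, Function.Injective f ∧
        ∀ i, Sat S (Function.update α j (f i)) ψ
  | α, .allCnt k j ψ =>
      ¬ ∃ f : Fin k → S.carrier, Function.Injective f ∧
        ∀ i, ¬ Sat S (Function.update α j (f i)) ψ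

/-- The linear order `A_n = ({0,…,n}, <)` with `min = 0`, `max = n` and the successor relation. -/
def AStruct (n : ℕ) : LOStruct where
  carrier := Fin (n + 1)
  lt := fun a b => a < b
  succ := fun a b => (a : ℕ) + 1 = (b : ℕ)
  bot := 0
  top := Fin.last n

/-- The five "positions" `{min, max, x, y, z}` used by separators. -/
inductive SVar : Type
  | vmin | vmax | vx | vy | vz
deriving DecidableEq

/-- An interpretation `(𝒜, α)`: a linear order `A_n` (on the integers `{0, …, n}`) together
with an assignment of the three variables `x, y, z`. -/
structure Interp : Type where
  n : ℕ
  a : Fin 3 → Fin (n + 1)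

/-- The integer value of each of `min, max, x, y, z` under an interpretation. -/
def Interp.val (I : Interp) : SVar → ℤ
  | .vmin => 0
  | .vmax => I.n
  | .vx => I.a 0
  | .vy => I.a 1
  | .vz => I.a 2

/-- The distance `d(a, b) = |a − b|` between the values of two positions. -/
def Interp.dist (I : Interp) (u u' : SVar) : ℕ := (I.val u - I.val u').natAbs

/-- `δ` separates the pair of interpretations `⟨I, J⟩`: there are distinct
`u, u' ∈ {min, max, x, y, z}` such that either the `<`-types differ, or both
`MIN[d_I(u,u'), d_J(u,u')] ≤ δ({u,u'})` and `d_I(u,u') ≠ d_J(u,u')`. -/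
def Separates (δ : Finset SVar → ℕ) (I J : Interp) : Prop :=
  ∃ u u' : SVar, u ≠ u' ∧
    (compare (I.val u) (I.val u') ≠ compare (J.val u) (J.val u') ∨
      (min (I.dist u u') (J.dist u u') ≤ δ {u, u'} ∧ I.dist u u' ≠ J.dist u u'))

/-- `δ : P₂({min,max,x,y,z}) → ℕ` is a separator for `⟨A, B⟩`. -/
def IsSeparator (δ : Finset SVar → ℕ) (A B : Set Interp) : Prop :=
  ∀ I ∈ A, ∀ J ∈ B, Separates δ I J

/-- The border-distance
`b(δ) = MAX {δ({min,max}), δ({min,u}) + δ({u',max}) : u, u' ∈ {x,y,z}}`. -/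
def borderDist (δ : Finset SVar → ℕ) : ℕ :=
  max (δ {SVar.vmin, SVar.vmax})
    ((({SVar.vx, SVar.vy, SVar.vz} : Finset SVar) ×ˢ
        ({SVar.vx, SVar.vy, SVar.vz} : Finset SVar)).sup
      fun p => δ {SVar.vmin, p.1} + δ {p.2, SVar.vmax})

/-- The centre-distance `c(δ) = MAX {δ(p) + δ(q) : p ≠ q ∈ P₂({x,y,z})}`. -/
def centreDist (δ : Finset SVar → ℕ) : ℕ :=
  max (δ {SVar.vx, SVar.vy} + δ {SVar.vx, SVar.vz})
    (max (δ {SVar.vx, SVar.vy} + δ {SVar.vy, SVar.vz})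
      (δ {SVar.vx, SVar.vz} + δ {SVar.vy, SVar.vz}))

/-- The weight `w(δ) = √(c(δ)² + b(δ))`. -/
noncomputable def sepWeight (δ : Finset SVar → ℕ) : ℝ :=
  Real.sqrt ((centreDist δ : ℝ) ^ 2 + (borderDist δ : ℝ))

/-- A minimal separator for `⟨A, B⟩`: a separator of minimal weight. -/
def IsMinimalSeparator (δ : Finset SVar → ℕ) (A B : Set Interp) : Prop :=
  IsSeparator δ A B ∧ ∀ δ' : Finset SVar → ℕ, IsSeparator δ' A B → sepWeight δ ≤ sepWeight δ'

/-- The total assignment attached to an interpretation: `x_0 = x`, `x_1 = y`, `x_2 = z`. -/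
def Interp.asgn (I : Interp) : ℕ → Fin (I.n + 1) :=
  fun j => if h : j < 3 then I.a ⟨j, h⟩ else 0

/-- The interpretation `I = (A_n, α)` satisfies the counting-logic formula `φ`. -/
def SatI (I : Interp) (φ : CFormula) : Prop := Sat (AStruct I.n) I.asgn φ

lemma sep_mono {δ δ' : Finset SVar → ℕ} (h : ∀ p, δ p ≤ δ' p) {I J : Interp} :
    Separates δ I J → Separates δ' I J := by
  rintro ⟨u, u', hne, h1 | ⟨h2, h3⟩⟩
  · exact ⟨u, u', hne, Or.inl h1⟩
  · exact ⟨u, u', hne, Or.inr ⟨h2.trans (h _), h3⟩⟩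

lemma centre_max_le (δ₁ δ₂ : Finset SVar → ℕ) :
    centreDist (fun p => max (δ₁ p) (δ₂ p)) ≤ centreDist δ₁ + centreDist δ₂ := by
  simp only [centreDist]
  omega

lemma border_max_le (δ₁ δ₂ : Finset SVar → ℕ) :
    borderDist (fun p => max (δ₁ p) (δ₂ p)) ≤ borderDist δ₁ + borderDist δ₂ := by
  simp only [borderDist]
  apply max_le
  · exact le_trans (by omega) (Nat.add_le_add (le_max_left _ _) (le_max_left _ _))
  · apply Finset.sup_le
    intro p hp
    have h1 : δ₁ {SVar.vmin, p.1} + δ₁ {p.2, SVar.vmax} ≤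
        (({SVar.vx, SVar.vy, SVar.vz} : Finset SVar) ×ˢ
          ({SVar.vx, SVar.vy, SVar.vz} : Finset SVar)).sup
          (fun p => δ₁ {SVar.vmin, p.1} + δ₁ {p.2, SVar.vmax}) :=
      Finset.le_sup (f := fun p => δ₁ {SVar.vmin, p.1} + δ₁ {p.2, SVar.vmax}) hp
    have h2 : δ₂ {SVar.vmin, p.1} + δ₂ {p.2, SVar.vmax} ≤
        (({SVar.vx, SVar.vy, SVar.vz} : Finset SVar) ×ˢ
          ({SVar.vx, SVar.vy, SVar.vz} : Finset SVar)).sup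
          (fun p => δ₂ {SVar.vmin, p.1} + δ₂ {p.2, SVar.vmax}) :=
      Finset.le_sup (f := fun p => δ₂ {SVar.vmin, p.1} + δ₂ {p.2, SVar.vmax}) hp
    have := le_max_right (δ₁ {SVar.vmin, SVar.vmax}) ((({SVar.vx, SVar.vy, SVar.vz} : Finset SVar) ×ˢ
          ({SVar.vx, SVar.vy, SVar.vz} : Finset SVar)).sup
          (fun p => δ₁ {SVar.vmin, p.1} + δ₁ {p.2, SVar.vmax}))
    have := le_max_right (δ₂ {SVar.vmin, SVar.vmax}) ((({SVar.vx, SVar.vy, SVar.vz} : Finset SVar) ×ˢ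
          ({SVar.vx, SVar.vy, SVar.vz} : Finset SVar)).sup
          (fun p => δ₂ {SVar.vmin, p.1} + δ₂ {p.2, SVar.vmax}))
    omega

lemma sqrt_sum_aux {c₁ c₂ b₁ b₂ c b : ℝ} (hc₁ : 0 ≤ c₁) (hc₂ : 0 ≤ c₂)
    (hb₁ : 0 ≤ b₁) (hb₂ : 0 ≤ b₂) (hc : c ≤ c₁ + c₂) (hb : b ≤ b₁ + b₂)
    (hcn : 0 ≤ c) :
    Real.sqrt (c ^ 2 + b) ≤ Real.sqrt (c₁ ^ 2 + b₁) + Real.sqrt (c₂ ^ 2 + b₂) := by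
  have hs₁ : Real.sqrt (c₁ ^ 2 + b₁) ^ 2 = c₁ ^ 2 + b₁ := Real.sq_sqrt (by positivity)
  have hs₂ : Real.sqrt (c₂ ^ 2 + b₂) ^ 2 = c₂ ^ 2 + b₂ := Real.sq_sqrt (by positivity)
  have hge₁ : c₁ ≤ Real.sqrt (c₁ ^ 2 + b₁) := by
    calc c₁ = Real.sqrt (c₁ ^ 2) := (Real.sqrt_sq hc₁).symm
      _ ≤ _ := Real.sqrt_le_sqrt (by linarith)
  have hge₂ : c₂ ≤ Real.sqrt (c₂ ^ 2 + b₂) := by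
    calc c₂ = Real.sqrt (c₂ ^ 2) := (Real.sqrt_sq hc₂).symm
      _ ≤ _ := Real.sqrt_le_sqrt (by linarith)
  have hnn₁ : 0 ≤ Real.sqrt (c₁ ^ 2 + b₁) := Real.sqrt_nonneg _
  have hnn₂ : 0 ≤ Real.sqrt (c₂ ^ 2 + b₂) := Real.sqrt_nonneg _
  have hmul : c₁ * c₂ ≤ Real.sqrt (c₁ ^ 2 + b₁) * Real.sqrt (c₂ ^ 2 + b₂) :=
    mul_le_mul hge₁ hge₂ hc₂ hnn₁
  have key : c ^ 2 + b ≤ (Real.sqrt (c₁ ^ 2 + b₁) + Real.sqrt (c₂ ^ 2 + b₂)) ^ 2 := by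
    nlinarith
  calc Real.sqrt (c ^ 2 + b)
      ≤ Real.sqrt ((Real.sqrt (c₁ ^ 2 + b₁) + Real.sqrt (c₂ ^ 2 + b₂)) ^ 2) :=
        Real.sqrt_le_sqrt key
    _ = _ := Real.sqrt_sq (by positivity)

lemma weight_max_le (δ₁ δ₂ : Finset SVar → ℕ) :
    sepWeight (fun p => max (δ₁ p) (δ₂ p)) ≤ sepWeight δ₁ + sepWeight δ₂ := by
  have hc := centre_max_le δ₁ δ₂
  have hb := border_max_le δ₁ δ₂
  unfold sepWeight
  apply sqrt_sum_aux (Nat.cast_nonneg _) (Nat.cast_nonneg _) (Nat.cast_nonneg _)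
    (Nat.cast_nonneg _) _ _ (Nat.cast_nonneg _)
  · exact_mod_cast hc
  · exact_mod_cast hb

/-- Let `v` be a node of the extended syntax tree of a `C^t_3` formula `ψ`
with `(A,B) ⊨ ψ` having two children `v₁, v₂` — so the syntax label of `v` is `∨` or `∧`, the
node `v` is labelled by a pair of families `⟨A,B⟩` with `(A,B) ⊨ ψ₁ ∨ ψ₂` (resp. `ψ₁ ∧ ψ₂`),
and the children are labelled `⟨A_i, B⟩` with `A_i = {I ∈ A : I ⊨ ψ_i}` (resp. `⟨A, B_i⟩` with
`B_i = {J ∈ B : J ⊨ ¬ψ_i}`).  If `δ_i` is a minimal separator for `il(v_i)` (`i = 1, 2`) and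
`δ` is a minimal separator for `il(v)`, then `w(δ) ≤ w(δ₁) + w(δ₂)`. -/
theorem est_two_children_weight (t : ℕ) (ψ₁ ψ₂ : CFormula) (A B : Set Interp)
    (δ δ₁ δ₂ : Finset SVar → ℕ) :
    -- the ∨ case
    (((CFormula.or ψ₁ ψ₂).varsLT 3) → ((CFormula.or ψ₁ ψ₂).crank ≤ t) →
      (∀ I ∈ A, SatI I (CFormula.or ψ₁ ψ₂)) → (∀ J ∈ B, ¬ SatI J (CFormula.or ψ₁ ψ₂)) →
      IsMinimalSeparator δ A B →
      IsMinimalSeparator δ₁ {I ∈ A | SatI I ψ₁} B →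
      IsMinimalSeparator δ₂ {I ∈ A | SatI I ψ₂} B →
      sepWeight δ ≤ sepWeight δ₁ + sepWeight δ₂) ∧
    -- the ∧ case
    (((CFormula.and ψ₁ ψ₂).varsLT 3) → ((CFormula.and ψ₁ ψ₂).crank ≤ t) →
      (∀ I ∈ A, SatI I (CFormula.and ψ₁ ψ₂)) → (∀ J ∈ B, ¬ SatI J (CFormula.and ψ₁ ψ₂)) →
      IsMinimalSeparator δ A B →
      IsMinimalSeparator δ₁ A {J ∈ B | ¬ SatI J ψ₁} →
      IsMinimalSeparator δ₂ A {J ∈ B | ¬ SatI J ψ₂} →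
      sepWeight δ ≤ sepWeight δ₁ + sepWeight δ₂) := by
  constructor
  · intro _ _ hA _ hδ hδ₁ hδ₂
    have hsep : IsSeparator (fun p => max (δ₁ p) (δ₂ p)) A B := by
      intro I hI J hJ
      have h : SatI I ψ₁ ∨ SatI I ψ₂ := by
        have := hA I hI
        simpa only [SatI, Sat] using this
      rcases h with h | h
      · exact sep_mono (fun p => le_max_left _ _) (hδ₁.1 I ⟨hI, h⟩ J hJ)
      · exact sep_mono (fun p => le_max_right _ _) (hδ₂.1 I ⟨hI, h⟩ J hJ)
    exact le_trans (hδ.2 _ hsep) (weight_max_le δ₁ δ₂)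
  · intro _ _ _ hB hδ hδ₁ hδ₂
    have hsep : IsSeparator (fun p => max (δ₁ p) (δ₂ p)) A B := by
      intro I hI J hJ
      have h : ¬ SatI J ψ₁ ∨ ¬ SatI J ψ₂ := by
        have := hB J hJ
        simp only [SatI, Sat] at this
        tauto
      rcases h with h | h
      · exact sep_mono (fun p => le_max_left _ _) (hδ₁.1 I hI J ⟨hJ, h⟩)
      · exact sep_mono (fun p => le_max_right _ _) (hδ₂.1 I hI J ⟨hJ, h⟩)
    exact le_trans (hδ.2 _ hsep) (weight_max_le δ₁ δ₂)
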